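/- arXiv:2507.02889 — 3 statements merged into one kernel-verified Lean document; each statement's English description precedes it below -/
import Mathlib

section
/- Let α > 0, β > 0, λ ∈ ℝ, and let s > 0 be a real number with |λ| < s^α. Then ∫₀^∞ e^{−st} · (∑_{k=0}^∞ k · λ^k · t^{αk+β−1} · (ln t − ψ(αk+β)) / Γ(αk+β)) dt = − λ · s^{α−β} · ln s / (s^α − λ)². (The integrand series is the term-by-term derivative with respect to α of t^{β−1} E_{α,β}(λ t^α).) -/
open Real MeasureTheory

/-- The digamma function `ψ(x) = the logarithmic derivative of Γ`, i.e. the derivative of `log ∘ Γ`. -/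
noncomputable def digamma (x : ℝ) : ℝ := deriv (fun y : ℝ => Real.log (Real.Gamma y)) x

/-!
Differentiating `∫₀^∞ t^(a-1) e^(-st) dt = Γ(a) s^(-a)` in `a` shows that the Laplace transform
of `t^(a-1) (log t - ψ(a)) / Γ(a)` is `-s^(-a) log s`. With `a = αk + β` the transformed series
is `-s^(-β) log s · ∑ k x^k = -s^(-β) log s · x / (1 - x)^2`, where `x = λ s^(-α)`.

Termwise integration is justified by `|log t| ≤ (t^δ + t^(-δ)) / δ`, which bounds the `L¹` norm
of the `k`-th term by the Gamma ratios `Γ(a ± δ) / Γ(a)` and by `|ψ(a)|`; convexity of `Γ` and of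
`log Γ` makes these grow at most linearly in `a`, so the norms are `O(k² (|λ| s^(-α))^k)`.
-/

open Set Filter Topology

lemma abs_log_le_rpow_add_rpow_neg {t δ : ℝ} (ht : 0 < t) (hδ : 0 < δ) :
    |log t| ≤ (t ^ δ + t ^ (-δ)) / δ := by
  have hpos : log t ≤ t ^ δ / δ := log_le_rpow_div ht.le hδ
  have hneg : -log t ≤ t ^ (-δ) / δ := by
    simpa [log_inv, inv_rpow ht.le, rpow_neg ht.le] using log_le_rpow_div (inv_pos.2 ht).le hδ
  have : 0 ≤ t ^ δ / δ := by positivity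
  have : 0 ≤ t ^ (-δ) / δ := by positivity
  rw [abs_le, add_div]
  constructor <;> linarith

lemma rpow_le_rpow_add_rpow {t x c d : ℝ} (ht : 0 < t) (hcx : c ≤ x) (hxd : x ≤ d) :
    t ^ x ≤ t ^ c + t ^ d := by
  have : 0 < t ^ c := rpow_pos_of_pos ht c
  have : 0 < t ^ d := rpow_pos_of_pos ht d
  rcases le_or_gt t 1 with h | h
  · linarith [rpow_le_rpow_of_exponent_ge ht h hcx]
  · linarith [rpow_le_rpow_of_exponent_le h.le hxd]

lemma rpow_sub_one_mul_abs_log_le {t a δ : ℝ} (ht : 0 < t) (hδ : 0 < δ) :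
    t ^ (a - 1) * |log t| ≤ (t ^ (a + δ - 1) + t ^ (a - δ - 1)) / δ :=
  calc t ^ (a - 1) * |log t| ≤ t ^ (a - 1) * ((t ^ δ + t ^ (-δ)) / δ) :=
        mul_le_mul_of_nonneg_left (abs_log_le_rpow_add_rpow_neg ht hδ) (rpow_nonneg ht.le _)
    _ = (t ^ (a + δ - 1) + t ^ (a - δ - 1)) / δ := by
        rw [show a + δ - 1 = a - 1 + δ by ring, show a - δ - 1 = a - 1 + -δ by ring,
          rpow_add ht, rpow_add ht]
        ring

lemma integrableOn_rpow_mul_exp_neg_mul {a s : ℝ} (ha : 0 < a) (hs : 0 < s) :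
    IntegrableOn (fun t => t ^ (a - 1) * exp (-(s * t))) (Ioi 0) := by
  simpa [rpow_one, neg_mul] using
    integrableOn_rpow_mul_exp_neg_mul_rpow (p := 1) (by linarith : -1 < a - 1) one_pos hs

lemma hasDerivAt_rpow_sub_one_mul_exp {t s : ℝ} (ht : 0 < t) (x : ℝ) :
    HasDerivAt (fun x => t ^ (x - 1) * exp (-(s * t)))
      (t ^ (x - 1) * log t * exp (-(s * t))) x := by
  have := ((hasStrictDerivAt_const_rpow ht (x - 1)).hasDerivAt.comp x
    ((hasDerivAt_id x).sub_const 1)).mul_const (exp (-(s * t)))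
  simpa using this

lemma hasDerivAt_integral_rpow_mul_exp_neg_mul {a s : ℝ} (ha : 0 < a) (hs : 0 < s) :
    IntegrableOn (fun t => t ^ (a - 1) * log t * exp (-(s * t))) (Ioi 0) ∧
      HasDerivAt (fun x => ∫ t in Ioi 0, t ^ (x - 1) * exp (-(s * t)))
        (∫ t in Ioi 0, t ^ (a - 1) * log t * exp (-(s * t))) a := by
  set δ := a / 4 with hδ
  have hδ0 : 0 < δ := by positivity
  refine hasDerivAt_integral_of_dominated_loc_of_deriv_le (μ := volume.restrict (Ioi 0))
    (F := fun x t => t ^ (x - 1) * exp (-(s * t)))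
    (F' := fun x t => t ^ (x - 1) * log t * exp (-(s * t))) (Metric.ball_mem_nhds a hδ0)
    (bound := fun t => 2 / δ * (t ^ (a + 2 * δ - 1) * exp (-(s * t))
      + t ^ (a - 2 * δ - 1) * exp (-(s * t))))
    (Eventually.of_forall fun x => (by fun_prop : Measurable _).aestronglyMeasurable)
    (integrableOn_rpow_mul_exp_neg_mul ha hs) (by fun_prop : Measurable _).aestronglyMeasurable
    ?_ ?_ ?_
  · filter_upwards [self_mem_ae_restrict measurableSet_Ioi] with t (ht : 0 < t) x hx
    rw [Metric.mem_ball, Real.dist_eq, abs_lt] at hx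
    have hlog := rpow_sub_one_mul_abs_log_le (a := x) ht hδ0
    have hp := rpow_le_rpow_add_rpow (t := t) ht (c := a - 2 * δ - 1) (d := a + 2 * δ - 1)
      (x := x + δ - 1) (by linarith) (by linarith)
    have hm := rpow_le_rpow_add_rpow (t := t) ht (c := a - 2 * δ - 1) (d := a + 2 * δ - 1)
      (x := x - δ - 1) (by linarith) (by linarith)
    rw [norm_mul, norm_mul, norm_of_nonneg (rpow_nonneg ht.le _), norm_eq_abs,
      norm_of_nonneg (exp_pos _).le]
    calc t ^ (x - 1) * |log t| * exp (-(s * t))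
        ≤ (t ^ (x + δ - 1) + t ^ (x - δ - 1)) / δ * exp (-(s * t)) := by gcongr
      _ ≤ 2 * (t ^ (a - 2 * δ - 1) + t ^ (a + 2 * δ - 1)) / δ * exp (-(s * t)) := by
          gcongr; linarith
      _ = _ := by ring
  · exact ((integrableOn_rpow_mul_exp_neg_mul (by linarith) hs).add
      (integrableOn_rpow_mul_exp_neg_mul (by linarith) hs)).const_mul _
  · filter_upwards [self_mem_ae_restrict measurableSet_Ioi] with t (ht : 0 < t) x _
    exact hasDerivAt_rpow_sub_one_mul_exp ht x

lemma differentiableAt_Gamma_of_pos {a : ℝ} (ha : 0 < a) : DifferentiableAt ℝ Gamma a :=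
  differentiableAt_Gamma fun m => by linarith [(Nat.cast_nonneg m : (0 : ℝ) ≤ m)]

lemma integral_rpow_mul_log_mul_exp_neg_mul {a s : ℝ} (ha : 0 < a) (hs : 0 < s) :
    ∫ t in Ioi 0, t ^ (a - 1) * log t * exp (-(s * t))
      = (1 / s) ^ a * (deriv Gamma a - Gamma a * log s) := by
  have hmellin : (fun x => (1 / s) ^ x * Gamma x)
      =ᶠ[𝓝 a] fun x => ∫ t in Ioi 0, t ^ (x - 1) * exp (-(s * t)) := by
    filter_upwards [eventually_gt_nhds ha] with x hx
    exact (integral_rpow_mul_exp_neg_mul_Ioi hx hs).symm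
  have hderiv := ((hasStrictDerivAt_const_rpow (one_div_pos.2 hs) a).hasDerivAt.mul
    (differentiableAt_Gamma_of_pos ha).hasDerivAt)
  rw [((hasDerivAt_integral_rpow_mul_exp_neg_mul ha hs).2.congr_of_eventuallyEq hmellin).unique
    hderiv, one_div, log_inv]
  ring

lemma digamma_eq_deriv_Gamma_div {a : ℝ} (ha : 0 < a) : digamma a = deriv Gamma a / Gamma a :=
  deriv.log (differentiableAt_Gamma_of_pos ha) (Gamma_pos_of_pos ha).ne'

lemma differentiableAt_log_Gamma {a : ℝ} (ha : 0 < a) : DifferentiableAt ℝ (log ∘ Gamma) a :=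
  (differentiableAt_Gamma_of_pos ha).log (Gamma_pos_of_pos ha).ne'

lemma monotoneOn_digamma : MonotoneOn digamma (Ioi 0) :=
  convexOn_log_Gamma.monotoneOn_deriv fun _ hx => differentiableAt_log_Gamma hx

lemma digamma_le_log {a : ℝ} (ha : 0 < a) : digamma a ≤ log a := by
  have h := convexOn_log_Gamma.deriv_le_slope (mem_Ioi.2 ha)
    (mem_Ioi.2 (by linarith : 0 < a + 1)) (lt_add_one a) (differentiableAt_log_Gamma ha)
  rwa [slope_def_field, Function.comp_apply, Function.comp_apply, Gamma_add_one ha.ne',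
    log_mul ha.ne' (Gamma_pos_of_pos ha).ne', add_sub_cancel_right, add_sub_cancel_left,
    div_one] at h

lemma abs_digamma_le {a b : ℝ} (hb : 0 < b) (hab : b ≤ a) : |digamma a| ≤ |digamma b| + a := by
  have hmono := monotoneOn_digamma (mem_Ioi.2 hb) (mem_Ioi.2 (hb.trans_le hab)) hab
  have hlog := (digamma_le_log (hb.trans_le hab)).trans (log_le_self (by linarith))
  rw [abs_le]
  constructor <;> linarith [neg_abs_le (digamma b), abs_nonneg (digamma b)]

/-- On `[a, a + 1]`, convexity bounds `Γ` by `max (Γ a) (Γ (a + 1)) = max 1 a * Γ a`. -/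
lemma Gamma_add_le {a δ : ℝ} (ha : 0 < a) (hδ₀ : 0 ≤ δ) (hδ₁ : δ ≤ 1) :
    Gamma (a + δ) ≤ (1 + a) * Gamma a := by
  have hseg : a + δ ∈ segment ℝ a (a + 1) := by
    rw [segment_eq_Icc (by linarith)]
    constructor <;> linarith
  have h := convexOn_Gamma.le_on_segment (mem_Ioi.2 ha) (mem_Ioi.2 (by linarith)) hseg
  rw [Gamma_add_one ha.ne'] at h
  have := Gamma_pos_of_pos ha
  rcases max_cases (Gamma a) (a * Gamma a) with ⟨he, _⟩ | ⟨he, _⟩ <;>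
    rw [he] at h <;> nlinarith

/-- The slope of `log ∘ Γ` on `[a - δ, a]` is at least `ψ (a - δ) ≥ ψ (b - δ)`. -/
lemma Gamma_sub_le {a b δ : ℝ} (hδ : 0 < δ) (hδb : δ < b) (hba : b ≤ a) :
    Gamma (a - δ) ≤ exp (-(δ * digamma (b - δ))) * Gamma a := by
  have ha : 0 < a - δ := by linarith
  have hslope := convexOn_log_Gamma.deriv_le_slope (mem_Ioi.2 ha) (mem_Ioi.2 (by linarith))
    (by linarith : a - δ < a) (differentiableAt_log_Gamma ha)
  have hmono := monotoneOn_digamma (mem_Ioi.2 (by linarith : 0 < b - δ)) (mem_Ioi.2 ha)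
    (by linarith : b - δ ≤ a - δ)
  rw [slope_def_field, show a - (a - δ) = δ by ring, le_div_iff₀ hδ] at hslope
  have hlog : log (Gamma (a - δ)) ≤ -(δ * digamma (b - δ)) + log (Gamma a) := by
    change digamma (a - δ) * δ ≤ log (Gamma a) - log (Gamma (a - δ)) at hslope
    nlinarith
  calc Gamma (a - δ) = exp (log (Gamma (a - δ))) := (exp_log (Gamma_pos_of_pos ha)).symm
    _ ≤ exp (-(δ * digamma (b - δ)) + log (Gamma a)) := exp_le_exp.2 hlog
    _ = exp (-(δ * digamma (b - δ))) * Gamma a := by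
        rw [exp_add, exp_log (Gamma_pos_of_pos (by linarith))]

lemma integrableOn_exp_neg_mul_mul_rpow_log_sub_digamma {a s : ℝ} (ha : 0 < a) (hs : 0 < s) :
    IntegrableOn (fun t => exp (-(s * t)) * (t ^ (a - 1) * (log t - digamma a) / Gamma a))
      (Ioi 0) := by
  have h : IntegrableOn (fun t => (Gamma a)⁻¹ * (t ^ (a - 1) * log t * exp (-(s * t)))
      - digamma a / Gamma a * (t ^ (a - 1) * exp (-(s * t)))) (Ioi 0) :=
    ((hasDerivAt_integral_rpow_mul_exp_neg_mul ha hs).1.const_mul _).sub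
      ((integrableOn_rpow_mul_exp_neg_mul ha hs).const_mul _)
  exact h.congr_fun (fun t _ => by ring) measurableSet_Ioi

lemma integral_exp_neg_mul_mul_rpow_log_sub_digamma {a s : ℝ} (ha : 0 < a) (hs : 0 < s) :
    ∫ t in Ioi 0, exp (-(s * t)) * (t ^ (a - 1) * (log t - digamma a) / Gamma a)
      = -((1 / s) ^ a * log s) := by
  rw [setIntegral_congr_fun measurableSet_Ioi (g := fun t => (Gamma a)⁻¹ *
      (t ^ (a - 1) * log t * exp (-(s * t))) - digamma a / Gamma a *
      (t ^ (a - 1) * exp (-(s * t)))) (fun t _ => by ring),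
    integral_sub (((hasDerivAt_integral_rpow_mul_exp_neg_mul ha hs).1.const_mul _))
      ((integrableOn_rpow_mul_exp_neg_mul ha hs).const_mul _),
    integral_const_mul, integral_const_mul, integral_rpow_mul_log_mul_exp_neg_mul ha hs,
    integral_rpow_mul_exp_neg_mul_Ioi ha hs, digamma_eq_deriv_Gamma_div ha]
  have := (Gamma_pos_of_pos ha).ne'
  field_simp
  ring

lemma integral_norm_exp_neg_mul_mul_rpow_mul_log_sub_le {a s δ : ℝ} (hs : 0 < s) (hδ : 0 < δ)
    (hδa : δ < a) (c : ℝ) :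
    ∫ t in Ioi 0, ‖exp (-(s * t)) * (t ^ (a - 1) * (log t - c))‖
      ≤ ((1 / s) ^ (a + δ) * Gamma (a + δ) + (1 / s) ^ (a - δ) * Gamma (a - δ)) / δ
        + |c| * ((1 / s) ^ a * Gamma a) := by
  have hp := integrableOn_rpow_mul_exp_neg_mul (by linarith : 0 < a + δ) hs
  have hm := integrableOn_rpow_mul_exp_neg_mul (by linarith : 0 < a - δ) hs
  have h0 := integrableOn_rpow_mul_exp_neg_mul (by linarith : 0 < a) hs
  have hpm : IntegrableOn (fun t => (t ^ (a + δ - 1) * exp (-(s * t))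
      + t ^ (a - δ - 1) * exp (-(s * t))) / δ) (Ioi 0) := (hp.add hm).div_const δ
  calc ∫ t in Ioi 0, ‖exp (-(s * t)) * (t ^ (a - 1) * (log t - c))‖
      ≤ ∫ t in Ioi 0,
          (t ^ (a + δ - 1) * exp (-(s * t)) + t ^ (a - δ - 1) * exp (-(s * t))) / δ
            + |c| * (t ^ (a - 1) * exp (-(s * t))) := by
        refine integral_mono_of_nonneg (Eventually.of_forall fun _ => norm_nonneg _)
          (hpm.add (h0.const_mul _)) ?_
        filter_upwards [self_mem_ae_restrict measurableSet_Ioi] with t (ht : 0 < t)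
        have hlog := rpow_sub_one_mul_abs_log_le (a := a) ht hδ
        have := abs_sub (log t) c
        have := rpow_nonneg ht.le (a - 1)
        rw [norm_mul, norm_mul, norm_of_nonneg (exp_pos _).le,
          norm_of_nonneg (rpow_nonneg ht.le _), norm_eq_abs]
        calc exp (-(s * t)) * (t ^ (a - 1) * |log t - c|)
            ≤ exp (-(s * t)) * (t ^ (a - 1) * |log t| + |c| * t ^ (a - 1)) := by
              gcongr; nlinarith
          _ ≤ exp (-(s * t)) *
              ((t ^ (a + δ - 1) + t ^ (a - δ - 1)) / δ + |c| * t ^ (a - 1)) := by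
              gcongr
          _ = _ := by ring
    _ = _ := by
        rw [integral_add hpm (h0.const_mul _), integral_div, integral_add hp hm,
          integral_const_mul, integral_rpow_mul_exp_neg_mul_Ioi (by linarith) hs,
          integral_rpow_mul_exp_neg_mul_Ioi (by linarith) hs,
          integral_rpow_mul_exp_neg_mul_Ioi (by linarith) hs]

lemma exists_integral_norm_exp_neg_mul_mul_rpow_log_sub_digamma_le {b s : ℝ} (hb : 0 < b)
    (hs : 0 < s) :
    ∃ K, ∀ a, b ≤ a →
      ∫ t in Ioi 0, ‖exp (-(s * t)) * (t ^ (a - 1) * (log t - digamma a) / Gamma a)‖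
        ≤ K * (1 + a) * (1 / s) ^ a := by
  obtain ⟨δ, hδ, hδb, hδ₁⟩ : ∃ δ : ℝ, 0 < δ ∧ δ < b ∧ δ ≤ 1 :=
    ⟨min b 1 / 2, by positivity, by linarith [min_le_left b 1], by linarith [min_le_right b 1]⟩
  set u := (1 / s) ^ δ
  set v := (1 / s) ^ (-δ) * exp (-(δ * digamma (b - δ)))
  have hu : 0 ≤ u := by positivity
  have hv : 0 ≤ v := by positivity
  refine ⟨(u + v) / δ + |digamma b| + 1, fun a hba => ?_⟩
  have ha : 0 < a := hb.trans_le hba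
  have hΓ := Gamma_pos_of_pos ha
  set P := (1 / s) ^ a
  have hP : 0 < P := by positivity
  have hnorm : ∀ t, ‖exp (-(s * t)) * (t ^ (a - 1) * (log t - digamma a) / Gamma a)‖
      = ‖exp (-(s * t)) * (t ^ (a - 1) * (log t - digamma a))‖ / Gamma a := fun t => by
    rw [← mul_div_assoc, norm_div, norm_of_nonneg hΓ.le]
  simp_rw [hnorm]
  rw [integral_div, div_le_iff₀ hΓ]
  calc _ ≤ ((1 / s) ^ (a + δ) * Gamma (a + δ) + (1 / s) ^ (a - δ) * Gamma (a - δ)) / δ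
        + |digamma a| * ((1 / s) ^ a * Gamma a) :=
        integral_norm_exp_neg_mul_mul_rpow_mul_log_sub_le hs hδ (by linarith) _
    _ = (P * u * Gamma (a + δ) + P * (1 / s) ^ (-δ) * Gamma (a - δ)) / δ
        + |digamma a| * (P * Gamma a) := by
        rw [sub_eq_add_neg a δ, rpow_add (by positivity), rpow_add (by positivity)]
    _ ≤ (P * u * ((1 + a) * Gamma a)
          + P * (1 / s) ^ (-δ) * (exp (-(δ * digamma (b - δ))) * Gamma a)) / δ
        + (|digamma b| + a) * (P * Gamma a) := by
        gcongr
        · exact Gamma_add_le ha hδ.le hδ₁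
        · exact Gamma_sub_le hδ hδb hba
        · exact abs_digamma_le hb hba
    _ = P * Gamma a * ((u * (1 + a) + v) / δ + |digamma b| + a) := by ring
    _ ≤ P * Gamma a *
          ((u * (1 + a) + v * (1 + a)) / δ + |digamma b| * (1 + a) + (1 + a)) := by
        gcongr
        · nlinarith
        · nlinarith [abs_nonneg (digamma b)]
        · linarith
    _ = ((u + v) / δ + |digamma b| + 1) * (1 + a) * P * Gamma a := by ring

lemma rpow_mul_natCast_add {r : ℝ} (hr : 0 < r) (α β : ℝ) (k : ℕ) :
    r ^ (α * k + β) = (r ^ α) ^ k * r ^ β := by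
  rw [rpow_add hr, rpow_mul_natCast hr.le]

lemma abs_mul_one_div_rpow_lt_one {α lam s : ℝ} (hs : 0 < s) (hlam : |lam| < s ^ α) :
    |lam| * (1 / s) ^ α < 1 := by
  rwa [one_div, inv_rpow hs.le, ← div_eq_mul_inv, div_lt_one (by positivity)]

lemma summable_integral_norm_mul_exp_neg_mul_mul_rpow_log_sub_digamma {α β lam s : ℝ}
    (hα : 0 ≤ α) (hβ : 0 < β) (hs : 0 < s) (hlam : |lam| < s ^ α) :
    Summable fun k : ℕ => ∫ t in Ioi 0, ‖(k * lam ^ k) * (exp (-(s * t)) *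
      (t ^ (α * k + β - 1) * (log t - digamma (α * k + β)) / Gamma (α * k + β)))‖ := by
  obtain ⟨K, hK⟩ := exists_integral_norm_exp_neg_mul_mul_rpow_log_sub_digamma_le hβ hs
  have hx : ‖|lam| * (1 / s) ^ α‖ < 1 := by
    rw [norm_of_nonneg (by positivity)]
    exact abs_mul_one_div_rpow_lt_one hs hlam
  refine .of_nonneg_of_le (fun k => integral_nonneg fun _ => norm_nonneg _) (fun k => ?_)
    (((summable_pow_mul_geometric_of_norm_lt_one 1 hx).mul_left
      (K * (1 / s) ^ β * (1 + β))).add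
      ((summable_pow_mul_geometric_of_norm_lt_one 2 hx).mul_left (K * (1 / s) ^ β * α)))
  have hA : β ≤ α * k + β := le_add_of_nonneg_left (by positivity)
  calc _ = k * |lam| ^ k * ∫ t in Ioi 0, ‖exp (-(s * t)) *
        (t ^ (α * k + β - 1) * (log t - digamma (α * k + β)) / Gamma (α * k + β))‖ := by
        rw [← integral_const_mul]
        simp only [norm_mul, norm_pow, norm_eq_abs, Nat.abs_cast]
    _ ≤ k * |lam| ^ k * (K * (1 + (α * k + β)) * (1 / s) ^ (α * k + β)) := by
        gcongr
        exact hK _ hA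
    _ = _ := by rw [rpow_mul_natCast_add (by positivity), mul_pow]; ring

theorem laplace_deriv_alpha_ML (α β lam s : ℝ) (hα : 0 < α) (hβ : 0 < β) (hs : 0 < s)
    (hlam : |lam| < s ^ α) :
    (∫ t in Set.Ioi (0 : ℝ), Real.exp (-(s * t)) *
        ∑' k : ℕ, (k : ℝ) * lam ^ k * t ^ (α * k + β - 1) *
          (Real.log t - digamma (α * k + β)) / Real.Gamma (α * k + β))
      = -(lam * s ^ (α - β) * Real.log s / (s ^ α - lam) ^ 2) := by
  have hx : ‖lam * (1 / s) ^ α‖ < 1 := by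
    rw [norm_mul, norm_eq_abs, norm_of_nonneg (by positivity)]
    exact abs_mul_one_div_rpow_lt_one hs hlam
  have hsub : s ^ α - lam ≠ 0 := by linarith [le_abs_self lam]
  calc _ = ∫ t in Ioi 0, ∑' k : ℕ, (k * lam ^ k) * (exp (-(s * t)) *
        (t ^ (α * k + β - 1) * (log t - digamma (α * k + β)) / Gamma (α * k + β))) := by
        congr 1 with t
        rw [← tsum_mul_left]
        congr 1 with k
        ring
    _ = ∑' k : ℕ, ∫ t in Ioi 0, (k * lam ^ k) * (exp (-(s * t)) *
        (t ^ (α * k + β - 1) * (log t - digamma (α * k + β)) / Gamma (α * k + β))) :=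
        (integral_tsum_of_summable_integral_norm
          (fun k =>
            (integrableOn_exp_neg_mul_mul_rpow_log_sub_digamma (by positivity) hs).const_mul _)
          (summable_integral_norm_mul_exp_neg_mul_mul_rpow_log_sub_digamma hα.le hβ hs hlam)).symm
    _ = ∑' k : ℕ, -(log s * (1 / s) ^ β) * (k * (lam * (1 / s) ^ α) ^ k) := by
        congr 1 with k
        rw [integral_const_mul, integral_exp_neg_mul_mul_rpow_log_sub_digamma (by positivity) hs,
          rpow_mul_natCast_add (by positivity), mul_pow]
        ring
    _ = _ := by
        rw [tsum_mul_left, tsum_coe_mul_geometric_of_norm_lt_one hx, one_div, inv_rpow hs.le,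
          inv_rpow hs.le, rpow_sub hs]
        field_simp
end

section
/- Let α > 0, β > 0, λ ∈ ℝ, and let s > 0 be a real number. Then ∫₀^∞ e^{−st} · t^{β−1} · W_{α,β}(λ t^α) dt = s^{−β} · exp(λ · s^{−α}). -/
/-!
Expand `W_{α,β}(λ t^α)` and integrate term by term. The `k`-th term times `t^{β-1}` is a multiple
of `t^{αk+β-1}`, whose Laplace transform is `Γ(αk+β) s^{-(αk+β)}`; the Gamma factor cancels the
one in the series, leaving `s^{-β} (λ s^{-α})^k / k!`, which sums to `s^{-β} exp(λ s^{-α})`.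
The same computation with `|λ|` bounds the integrals of the absolute values, which justifies
exchanging sum and integral.
-/

open Real MeasureTheory

open Set Nat

noncomputable def wrightTerm (α β z : ℝ) (k : ℕ) : ℝ :=
  z ^ k / (k ! * Gamma (α * k + β))

lemma integrableOn_rpow_sub_one_mul_exp_neg_mul {a s : ℝ} (ha : 0 < a) (hs : 0 < s) :
    IntegrableOn (fun t : ℝ => t ^ (a - 1) * exp (-(s * t))) (Ioi 0) := by
  refine Integrable.of_integral_ne_zero ?_
  rw [integral_rpow_mul_exp_neg_mul_Ioi ha hs]
  positivity

section LaplaceWrightTerm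

variable {α β s : ℝ}

lemma laplaceKernel_mul_wrightTerm_eq (c : ℝ) (k : ℕ) {t : ℝ} (ht : 0 < t) :
    exp (-(s * t)) * t ^ (β - 1) * wrightTerm α β (c * t ^ α) k
      = c ^ k / (k ! * Gamma (α * k + β)) * (t ^ (α * k + β - 1) * exp (-(s * t))) := by
  rw [wrightTerm, mul_pow, ← rpow_natCast (t ^ α) k, ← rpow_mul ht.le,
    show α * (k : ℝ) + β - 1 = α * k + (β - 1) by ring, rpow_add ht]
  ring

lemma norm_laplaceKernel_mul_wrightTerm (hα : 0 ≤ α) (hβ : 0 < β) (c : ℝ) (k : ℕ) {t : ℝ}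
    (ht : 0 < t) :
    ‖exp (-(s * t)) * t ^ (β - 1) * wrightTerm α β (c * t ^ α) k‖
      = exp (-(s * t)) * t ^ (β - 1) * wrightTerm α β (|c| * t ^ α) k := by
  have hΓ : 0 < Gamma (α * k + β) := Gamma_pos_of_pos (by positivity)
  rw [laplaceKernel_mul_wrightTerm_eq c k ht, laplaceKernel_mul_wrightTerm_eq |c| k ht,
    Real.norm_eq_abs, abs_mul, abs_div, abs_pow, abs_of_pos (by positivity : (0 : ℝ) < k ! * _),
    abs_of_pos (by positivity : 0 < t ^ (α * k + β - 1) * exp (-(s * t)))]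

lemma integrableOn_laplaceKernel_mul_wrightTerm (hα : 0 ≤ α) (hβ : 0 < β) (hs : 0 < s) (c : ℝ)
    (k : ℕ) :
    IntegrableOn (fun t => exp (-(s * t)) * t ^ (β - 1) * wrightTerm α β (c * t ^ α) k)
      (Ioi 0) :=
  IntegrableOn.congr_fun
    ((integrableOn_rpow_sub_one_mul_exp_neg_mul (a := α * k + β) (by positivity) hs).const_mul _)
    (fun _ ht => (laplaceKernel_mul_wrightTerm_eq c k ht).symm) measurableSet_Ioi

lemma integral_laplaceKernel_mul_wrightTerm (hα : 0 ≤ α) (hβ : 0 < β) (hs : 0 < s) (c : ℝ)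
    (k : ℕ) :
    ∫ t in Ioi 0, exp (-(s * t)) * t ^ (β - 1) * wrightTerm α β (c * t ^ α) k
      = s ^ (-β) * ((c * s ^ (-α)) ^ k / k !) := by
  have hΓ : 0 < Gamma (α * k + β) := Gamma_pos_of_pos (by positivity)
  rw [setIntegral_congr_fun measurableSet_Ioi (fun _ ht => laplaceKernel_mul_wrightTerm_eq c k ht),
    integral_const_mul, integral_rpow_mul_exp_neg_mul_Ioi (by positivity) hs, one_div,
    inv_rpow hs.le, ← rpow_neg hs.le, neg_add, mul_pow, ← rpow_natCast (s ^ (-α)) k,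
    ← rpow_mul hs.le, rpow_add hs, neg_mul]
  field_simp

end LaplaceWrightTerm

theorem laplace_Wright (α β lam s : ℝ) (hα : 0 < α) (hβ : 0 < β) (hs : 0 < s) :
    (∫ t in Set.Ioi (0 : ℝ), Real.exp (-(s * t)) * t ^ (β - 1) *
        ∑' k : ℕ, (lam * t ^ α) ^ k / (k.factorial * Real.Gamma (α * k + β)))
      = s ^ (-β) * Real.exp (lam * s ^ (-α)) := by
  set f : ℕ → ℝ → ℝ := fun k t => exp (-(s * t)) * t ^ (β - 1) * wrightTerm α β (lam * t ^ α) k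
  have hexp (c : ℝ) : HasSum (fun k : ℕ => s ^ (-β) * ((c * s ^ (-α)) ^ k / k !))
      (s ^ (-β) * exp (c * s ^ (-α))) := by
    rw [exp_eq_exp_ℝ]
    exact (NormedSpace.expSeries_div_hasSum_exp (c * s ^ (-α))).mul_left (s ^ (-β))
  have hnorm : Summable fun k => ∫ t in Ioi 0, ‖f k t‖ := by
    refine (hexp |lam|).summable.congr fun k => ?_
    rw [← integral_laplaceKernel_mul_wrightTerm hα.le hβ hs]
    exact setIntegral_congr_fun measurableSet_Ioi
      fun _ ht => (norm_laplaceKernel_mul_wrightTerm hα.le hβ lam k ht).symm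
  calc (∫ t in Ioi 0, exp (-(s * t)) * t ^ (β - 1) *
        ∑' k : ℕ, (lam * t ^ α) ^ k / (k ! * Gamma (α * k + β)))
      = ∫ t in Ioi 0, ∑' k, f k t := by simp only [f, wrightTerm, tsum_mul_left]
    _ = ∑' k, ∫ t in Ioi 0, f k t := (integral_tsum_of_summable_integral_norm
          (integrableOn_laplaceKernel_mul_wrightTerm hα.le hβ hs lam) hnorm).symm
    _ = s ^ (-β) * exp (lam * s ^ (-α)) := by
        simp only [f, integral_laplaceKernel_mul_wrightTerm hα.le hβ hs, (hexp lam).tsum_eq]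
end

section
/- Let α > 0, β > 0, λ ∈ ℝ, and let s > 0 be a real number. Then ∫₀^∞ e^{−st} · (∑_{k=0}^∞ k · λ^k · t^{αk+β−1} · (ln t − ψ(αk+β)) / (k! · Γ(αk+β))) dt = − λ · ln s · s^{−(α+β)} · exp(λ · s^{−α}). (The integrand series is the term-by-term derivative with respect to α of t^{β−1} W_{α,β}(λ t^α).) -/
open Real MeasureTheory

/-!
The series is integrated term by term. Differentiating `∫₀^∞ t^(a-1) e^(-st) dt = Γ(a) s^(-a)`
in `a` gives `∫₀^∞ t^(a-1) e^(-st) (log t - ψ(a)) dt = -Γ(a) log s · s^(-a)`, because the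
`Γ'(a) s^(-a)` term cancels against `ψ(a) Γ(a) s^(-a)`. With `a = αk + β` the `k`-th term
contributes `-log s · s^(-β) · k (λ s^(-α))^k / k!`, and these sum to `-log s · s^(-β) · λ s^(-α)
e^(λ s^(-α))`.

Sum and integral may be exchanged because the `L¹` norm of the `k`-th term is
`O(k² |λ s^(-α)|^k / k!)`: bounding `|log t| ≤ (t^δ + t^(-δ))/δ` reduces it to `Γ(a ± δ)`, and
convexity of `Γ` on `[a, a + 1]` gives `Γ(a ± δ) = O((1 + a) Γ(a))`; the `ψ(a)` part is handled
the same way since `ψ(a) Γ(a) = Γ'(a) = ∫₀^∞ t^(a-1) e^(-t) log t dt`.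
-/

open Set Filter Topology
open scoped Nat

namespace WrightLaplace

lemma hasDerivAt_Gamma_of_pos {a : ℝ} (ha : 0 < a) : HasDerivAt Gamma (deriv Gamma a) a :=
  (differentiableAt_Gamma fun m h => by linarith [m.cast_nonneg (α := ℝ)]).hasDerivAt

lemma Gamma_add_le_one_add_mul_Gamma {a δ : ℝ} (ha : 0 < a) (hδ0 : 0 ≤ δ) (hδ1 : δ ≤ 1) :
    Gamma (a + δ) ≤ (1 + a) * Gamma a := by
  have h := convexOn_Gamma.2 (mem_Ioi.2 ha) (mem_Ioi.2 (by linarith : (0 : ℝ) < a + 1))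
    (sub_nonneg.2 hδ1) hδ0 (by ring)
  simp only [smul_eq_mul, show (1 - δ) * a + δ * (a + 1) = a + δ by ring,
    Gamma_add_one ha.ne'] at h
  nlinarith [mul_nonneg hδ0 (Gamma_pos_of_pos ha).le,
    mul_nonneg (mul_nonneg (sub_nonneg.2 hδ1) ha.le) (Gamma_pos_of_pos ha).le]

lemma sub_mul_Gamma_sub_le {a δ : ℝ} (hδ0 : 0 ≤ δ) (hδ1 : δ ≤ 1) (hδa : δ < a) :
    (a - δ) * Gamma (a - δ) ≤ (1 + a) * Gamma a := by
  have h := Gamma_add_le_one_add_mul_Gamma (hδ0.trans_lt hδa) (sub_nonneg.2 hδ1)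
    (by linarith : 1 - δ ≤ 1)
  rwa [show a + (1 - δ) = a - δ + 1 by ring, Gamma_add_one (sub_pos.2 hδa).ne'] at h

lemma rpow_mul_abs_log_le {t y lo hi δ : ℝ} (ht : 0 < t) (hδ : 0 < δ) (hlo : lo ≤ y)
    (hhi : y ≤ hi) : t ^ y * |log t| ≤ (t ^ (lo - δ) + t ^ (hi + δ)) / δ := by
  rcases le_total 1 t with h1 | h1
  · have hlog : |log t| ≤ t ^ δ / δ := by
      rw [abs_of_nonneg (log_nonneg h1)]
      exact log_le_rpow_div ht.le hδ
    calc t ^ y * |log t| ≤ t ^ hi * (t ^ δ / δ) :=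
          mul_le_mul (rpow_le_rpow_of_exponent_le h1 hhi) hlog (abs_nonneg _) (by positivity)
      _ = t ^ (hi + δ) / δ := by rw [rpow_add ht]; ring
      _ ≤ _ := by gcongr; exact le_add_of_nonneg_left (by positivity)
  · have hlog : |log t| ≤ t ^ (-δ) / δ := by
      rw [abs_of_nonpos (log_nonpos ht.le h1), ← log_inv, rpow_neg ht.le, ← inv_rpow ht.le]
      exact log_le_rpow_div (inv_nonneg.2 ht.le) hδ
    calc t ^ y * |log t| ≤ t ^ lo * (t ^ (-δ) / δ) :=
          mul_le_mul (rpow_le_rpow_of_exponent_ge ht h1 hlo) hlog (abs_nonneg _) (by positivity)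
      _ = t ^ (lo - δ) / δ := by rw [sub_eq_add_neg, rpow_add ht]; ring
      _ ≤ _ := by gcongr; exact le_add_of_nonneg_right (by positivity)

section Laplace

variable {s : ℝ}

lemma integrableOn_rpow_sub_one_mul_exp_neg_mul (hs : 0 < s) {a : ℝ} (ha : 0 < a) :
    IntegrableOn (fun t : ℝ => t ^ (a - 1) * exp (-(s * t))) (Ioi 0) := by
  simpa [rpow_one, neg_mul] using
    integrableOn_rpow_mul_exp_neg_mul_rpow (p := 1) (by linarith : -1 < a - 1) one_pos hs

lemma integral_rpow_sub_one_mul_exp_neg_mul (hs : 0 < s) {a : ℝ} (ha : 0 < a) :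
    ∫ t in Ioi 0, t ^ (a - 1) * exp (-(s * t)) = Gamma a * s ^ (-a) := by
  rw [integral_rpow_mul_exp_neg_mul_Ioi ha hs, one_div, inv_rpow hs.le, ← rpow_neg hs.le,
    mul_comm]

lemma norm_rpow_sub_one_mul_exp_neg_mul_mul_log_le {t x lo hi δ : ℝ} (ht : 0 < t) (hδ : 0 < δ)
    (hlo : lo ≤ x) (hhi : x ≤ hi) :
    ‖t ^ (x - 1) * exp (-(s * t)) * log t‖ ≤
      (t ^ (lo - δ - 1) * exp (-(s * t)) + t ^ (hi + δ - 1) * exp (-(s * t))) / δ := by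
  have h := rpow_mul_abs_log_le ht hδ (by linarith : lo - 1 ≤ x - 1) (by linarith : x - 1 ≤ hi - 1)
  rw [norm_mul, norm_mul, norm_of_nonneg (rpow_nonneg ht.le _), norm_of_nonneg (exp_pos _).le,
    norm_eq_abs]
  calc t ^ (x - 1) * exp (-(s * t)) * |log t| = t ^ (x - 1) * |log t| * exp (-(s * t)) := by ring
    _ ≤ (t ^ (lo - 1 - δ) + t ^ (hi - 1 + δ)) / δ * exp (-(s * t)) := by gcongr
    _ = _ := by rw [sub_right_comm, add_sub_right_comm]; ring

lemma hasDerivAt_rpow_sub_one {t : ℝ} (ht : 0 < t) (x : ℝ) :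
    HasDerivAt (fun x : ℝ => t ^ (x - 1)) (t ^ (x - 1) * log t) x := by
  simpa [mul_comm] using ((hasDerivAt_id x).sub_const 1).const_rpow ht

lemma hasDerivAt_integral_rpow_sub_one_mul_exp_neg_mul (hs : 0 < s) {a : ℝ} (ha : 0 < a) :
    IntegrableOn (fun t : ℝ => t ^ (a - 1) * exp (-(s * t)) * log t) (Ioi 0) ∧
      HasDerivAt (fun x : ℝ => ∫ t in Ioi 0, t ^ (x - 1) * exp (-(s * t)))
        (∫ t in Ioi 0, t ^ (a - 1) * exp (-(s * t)) * log t) a := by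
  have hδ : 0 < a / 3 := by positivity
  -- for `|x - a| < a / 3` the dominating function may use the exponents `a ± 2a/3`, still positive
  refine hasDerivAt_integral_of_dominated_loc_of_deriv_le (μ := volume.restrict (Ioi 0))
    (F := fun x t => t ^ (x - 1) * exp (-(s * t)))
    (F' := fun x t => t ^ (x - 1) * exp (-(s * t)) * log t) (Metric.ball_mem_nhds a hδ)
    (bound := fun t => (t ^ (a - a / 3 - a / 3 - 1) * exp (-(s * t)) +
      t ^ (a + a / 3 + a / 3 - 1) * exp (-(s * t))) / (a / 3)) ?_
    (integrableOn_rpow_sub_one_mul_exp_neg_mul hs ha) ?_ ?_ ?_ ?_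
  · filter_upwards [Ioi_mem_nhds ha] with x hx
    exact (integrableOn_rpow_sub_one_mul_exp_neg_mul hs hx).aestronglyMeasurable
  · exact (by fun_prop : Measurable fun t : ℝ => t ^ (a - 1) * exp (-(s * t)) * log t)
      |>.aestronglyMeasurable
  · rw [ae_restrict_iff' measurableSet_Ioi]
    refine .of_forall fun t ht x hx => ?_
    rw [Metric.mem_ball, dist_eq, abs_sub_lt_iff] at hx
    exact norm_rpow_sub_one_mul_exp_neg_mul_mul_log_le ht hδ (by linarith) (by linarith)
  · exact ((integrableOn_rpow_sub_one_mul_exp_neg_mul hs (by linarith)).add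
      (integrableOn_rpow_sub_one_mul_exp_neg_mul hs (by linarith))).div_const _
  · rw [ae_restrict_iff' measurableSet_Ioi]
    refine .of_forall fun t ht x _ => ?_
    simpa only [mul_right_comm] using (hasDerivAt_rpow_sub_one ht x).mul_const (exp (-(s * t)))

lemma integral_rpow_sub_one_mul_exp_neg_mul_mul_log (hs : 0 < s) {a : ℝ} (ha : 0 < a) :
    ∫ t in Ioi 0, t ^ (a - 1) * exp (-(s * t)) * log t =
      (deriv Gamma a - Gamma a * log s) * s ^ (-a) := by
  have hpow : HasDerivAt (fun x : ℝ => s ^ (-x)) (log s * -1 * s ^ (-a)) a :=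
    (hasDerivAt_neg a).const_rpow hs
  have hlaplace : (fun x => ∫ t in Ioi 0, t ^ (x - 1) * exp (-(s * t))) =ᶠ[𝓝 a]
      fun x => Gamma x * s ^ (-x) := by
    filter_upwards [Ioi_mem_nhds ha] with x hx
    exact integral_rpow_sub_one_mul_exp_neg_mul hs hx
  rw [(hasDerivAt_integral_rpow_sub_one_mul_exp_neg_mul hs ha).2.unique
    (((hasDerivAt_Gamma_of_pos ha).mul hpow).congr_of_eventuallyEq hlaplace)]
  ring

lemma digamma_mul_Gamma {a : ℝ} (ha : 0 < a) : digamma a * Gamma a = deriv Gamma a := by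
  rw [digamma, ((hasDerivAt_Gamma_of_pos ha).log (Gamma_pos_of_pos ha).ne').deriv,
    div_mul_cancel₀ _ (Gamma_pos_of_pos ha).ne']

lemma integrableOn_rpow_sub_one_mul_exp_neg_mul_mul_log_sub (hs : 0 < s) {a : ℝ} (ha : 0 < a)
    (c : ℝ) :
    IntegrableOn (fun t : ℝ => t ^ (a - 1) * exp (-(s * t)) * (log t - c)) (Ioi 0) := by
  simp_rw [mul_sub]
  exact (hasDerivAt_integral_rpow_sub_one_mul_exp_neg_mul hs ha).1.sub
    ((integrableOn_rpow_sub_one_mul_exp_neg_mul hs ha).mul_const c)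

theorem integral_rpow_sub_one_mul_exp_neg_mul_mul_log_sub_digamma (hs : 0 < s) {a : ℝ}
    (ha : 0 < a) :
    ∫ t in Ioi 0, t ^ (a - 1) * exp (-(s * t)) * (log t - digamma a) =
      -(Gamma a * log s * s ^ (-a)) := by
  simp_rw [mul_sub]
  rw [integral_sub (hasDerivAt_integral_rpow_sub_one_mul_exp_neg_mul hs ha).1
      ((integrableOn_rpow_sub_one_mul_exp_neg_mul hs ha).mul_const _),
    integral_mul_const, integral_rpow_sub_one_mul_exp_neg_mul_mul_log hs ha,
    integral_rpow_sub_one_mul_exp_neg_mul hs ha, ← digamma_mul_Gamma ha]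
  ring

lemma integral_norm_rpow_sub_one_mul_exp_neg_mul_mul_log_le (hs : 0 < s) {a δ : ℝ} (hδ : 0 < δ)
    (hδa : δ < a) :
    ∫ t in Ioi 0, ‖t ^ (a - 1) * exp (-(s * t)) * log t‖ ≤
      (Gamma (a - δ) * s ^ (-(a - δ)) + Gamma (a + δ) * s ^ (-(a + δ))) / δ := by
  have hlo := integrableOn_rpow_sub_one_mul_exp_neg_mul hs (sub_pos.2 hδa)
  have hhi := integrableOn_rpow_sub_one_mul_exp_neg_mul hs (by linarith : 0 < a + δ)
  rw [← integral_rpow_sub_one_mul_exp_neg_mul hs (sub_pos.2 hδa),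
    ← integral_rpow_sub_one_mul_exp_neg_mul hs (by linarith : 0 < a + δ),
    ← integral_add hlo hhi, ← integral_div]
  refine integral_mono_of_nonneg (.of_forall fun t => norm_nonneg _) ((hlo.add hhi).div_const δ) ?_
  rw [EventuallyLE, ae_restrict_iff' measurableSet_Ioi]
  exact .of_forall fun t ht => norm_rpow_sub_one_mul_exp_neg_mul_mul_log_le ht hδ le_rfl le_rfl

end Laplace

lemma abs_deriv_Gamma_le {a δ : ℝ} (hδ : 0 < δ) (hδa : δ < a) :
    |deriv Gamma a| ≤ (Gamma (a - δ) + Gamma (a + δ)) / δ := by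
  have h := integral_rpow_sub_one_mul_exp_neg_mul_mul_log one_pos (hδ.trans hδa)
  have hle := integral_norm_rpow_sub_one_mul_exp_neg_mul_mul_log_le one_pos hδ hδa
  rw [log_one, one_rpow, mul_zero, sub_zero, mul_one] at h
  rw [one_rpow, one_rpow, mul_one, mul_one] at hle
  rw [← h, ← norm_eq_abs]
  exact (norm_integral_le_integral_norm _).trans hle

lemma integral_norm_rpow_sub_one_mul_exp_neg_mul_mul_log_sub_digamma_le {s a δ : ℝ} (hs : 0 < s)
    (hδ : 0 < δ) (hδa : δ < a) :
    ∫ t in Ioi 0, ‖t ^ (a - 1) * exp (-(s * t)) * (log t - digamma a)‖ ≤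
      ((s ^ δ + 1) * Gamma (a - δ) + (s ^ (-δ) + 1) * Gamma (a + δ)) / δ * s ^ (-a) := by
  have ha : 0 < a := hδ.trans hδa
  have hlog := (hasDerivAt_integral_rpow_sub_one_mul_exp_neg_mul hs ha).1.norm
  have hpow := (integrableOn_rpow_sub_one_mul_exp_neg_mul hs ha).const_mul |digamma a|
  have hpointwise : ∀ t ∈ Ioi (0 : ℝ), ‖t ^ (a - 1) * exp (-(s * t)) * (log t - digamma a)‖ ≤
      ‖t ^ (a - 1) * exp (-(s * t)) * log t‖ + |digamma a| * (t ^ (a - 1) * exp (-(s * t))) := by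
    intro t (ht : 0 < t)
    rw [mul_sub]
    refine (norm_sub_le _ _).trans_eq ?_
    rw [norm_mul _ (digamma a), norm_of_nonneg (by positivity : 0 ≤ t ^ (a - 1) * exp (-(s * t))),
      norm_eq_abs (digamma a)]
    ring
  have hψ : |digamma a| * (Gamma a * s ^ (-a)) ≤ (Gamma (a - δ) + Gamma (a + δ)) / δ * s ^ (-a) := by
    rw [← mul_assoc, ← abs_of_pos (Gamma_pos_of_pos ha), ← abs_mul, digamma_mul_Gamma ha]
    exact mul_le_mul_of_nonneg_right (abs_deriv_Gamma_le hδ hδa) (rpow_nonneg hs.le _)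
  calc ∫ t in Ioi 0, ‖t ^ (a - 1) * exp (-(s * t)) * (log t - digamma a)‖
      ≤ ∫ t in Ioi 0, ‖t ^ (a - 1) * exp (-(s * t)) * log t‖ +
          |digamma a| * (t ^ (a - 1) * exp (-(s * t))) := by
        refine integral_mono_of_nonneg (.of_forall fun t => norm_nonneg _) (hlog.add hpow) ?_
        rw [EventuallyLE, ae_restrict_iff' measurableSet_Ioi]
        exact .of_forall hpointwise
    _ = (∫ t in Ioi 0, ‖t ^ (a - 1) * exp (-(s * t)) * log t‖) +
          |digamma a| * (Gamma a * s ^ (-a)) := by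
        rw [integral_add hlog hpow, integral_const_mul, integral_rpow_sub_one_mul_exp_neg_mul hs ha]
    _ ≤ (Gamma (a - δ) * s ^ (-(a - δ)) + Gamma (a + δ) * s ^ (-(a + δ))) / δ +
          (Gamma (a - δ) + Gamma (a + δ)) / δ * s ^ (-a) :=
        add_le_add (integral_norm_rpow_sub_one_mul_exp_neg_mul_mul_log_le hs hδ hδa) hψ
    _ = _ := by
        rw [show -(a - δ) = δ + -a by ring, show -(a + δ) = -δ + -a by ring, rpow_add hs,
          rpow_add hs]
        ring

lemma exists_integral_norm_rpow_sub_one_mul_exp_neg_mul_mul_log_sub_digamma_le {s b : ℝ}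
    (hs : 0 < s) (hb : 0 < b) :
    ∃ K, ∀ a, b ≤ a → ∫ t in Ioi 0, ‖t ^ (a - 1) * exp (-(s * t)) * (log t - digamma a)‖ ≤
      K * ((1 + a) * Gamma a * s ^ (-a)) := by
  obtain ⟨δ, hδ, hδb, hδ1⟩ : ∃ δ : ℝ, 0 < δ ∧ δ ≤ b / 2 ∧ δ ≤ 1 :=
    ⟨min b 1 / 2, by positivity, by linarith [min_le_left b 1], by linarith [min_le_right b 1]⟩
  refine ⟨((s ^ δ + 1) / (b / 2) + (s ^ (-δ) + 1)) / δ, fun a hba => ?_⟩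
  have ha : 0 < a := hb.trans_le hba
  have hsub : Gamma (a - δ) ≤ (1 + a) * Gamma a / (b / 2) :=
    calc Gamma (a - δ) ≤ (1 + a) * Gamma a / (a - δ) := by
          rw [le_div_iff₀ (by linarith), mul_comm]
          exact sub_mul_Gamma_sub_le hδ.le hδ1 (by linarith)
      _ ≤ (1 + a) * Gamma a / (b / 2) :=
          div_le_div_of_nonneg_left (by positivity) (by positivity) (by linarith)
  have hadd : Gamma (a + δ) ≤ (1 + a) * Gamma a := Gamma_add_le_one_add_mul_Gamma ha hδ.le hδ1
  calc _ ≤ ((s ^ δ + 1) * Gamma (a - δ) + (s ^ (-δ) + 1) * Gamma (a + δ)) / δ * s ^ (-a) :=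
        integral_norm_rpow_sub_one_mul_exp_neg_mul_mul_log_sub_digamma_le hs hδ (by linarith)
    _ ≤ ((s ^ δ + 1) * ((1 + a) * Gamma a / (b / 2)) + (s ^ (-δ) + 1) * ((1 + a) * Gamma a)) / δ *
          s ^ (-a) := by gcongr
    _ = _ := by ring

lemma summable_pow_mul_pow_div_factorial (m : ℕ) (q : ℝ) :
    Summable fun k : ℕ => (k : ℝ) ^ m * q ^ k / k ! := by
  refine summable_of_isBigO_nat (summable_pow_div_factorial (2 * q)) ?_
  exact ((isLittleO_pow_const_const_pow_of_one_lt (R := ℝ) m one_lt_two).isBigO.mul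
    (Asymptotics.isBigO_refl (fun k : ℕ => q ^ k / k !) atTop)).congr (fun k => by ring)
    (fun k => by ring)

lemma hasSum_nat_mul_pow_div_factorial (q : ℝ) :
    HasSum (fun k : ℕ => (k : ℝ) * q ^ k / k !) (q * exp q) := by
  have h := (NormedSpace.expSeries_div_hasSum_exp q).mul_left q
  rw [← exp_eq_exp_ℝ] at h
  refine (hasSum_nat_add_iff' 1).1 ?_
  rw [Finset.sum_range_one, Nat.cast_zero, zero_mul, zero_div, sub_zero]
  refine h.congr_fun fun k => ?_
  rw [Nat.factorial_succ]
  push_cast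
  field_simp
  ring

lemma rpow_neg_mul_natCast_add {s : ℝ} (hs : 0 < s) (α β : ℝ) (k : ℕ) :
    s ^ (-(α * k + β)) = (s ^ (-α)) ^ k * s ^ (-β) := by
  rw [← rpow_natCast, ← rpow_mul hs.le, ← rpow_add hs]
  ring_nf

noncomputable def wrightAlphaDerivTerm (α β lam : ℝ) (k : ℕ) (t : ℝ) : ℝ :=
  k * lam ^ k * t ^ (α * k + β - 1) * (log t - digamma (α * k + β)) /
    (k ! * Gamma (α * k + β))

section WrightAlphaDerivTerm

variable {s α β : ℝ}

lemma exp_neg_mul_mul_wrightAlphaDerivTerm (lam : ℝ) (k : ℕ) (t : ℝ) :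
    exp (-(s * t)) * wrightAlphaDerivTerm α β lam k t =
      k * lam ^ k / (k ! * Gamma (α * k + β)) *
        (t ^ (α * k + β - 1) * exp (-(s * t)) * (log t - digamma (α * k + β))) := by
  rw [wrightAlphaDerivTerm]
  ring

lemma integrableOn_exp_neg_mul_mul_wrightAlphaDerivTerm (hs : 0 < s) (hα : 0 ≤ α) (hβ : 0 < β)
    (lam : ℝ) (k : ℕ) :
    IntegrableOn (fun t => exp (-(s * t)) * wrightAlphaDerivTerm α β lam k t) (Ioi 0) := by
  simp_rw [exp_neg_mul_mul_wrightAlphaDerivTerm]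
  exact (integrableOn_rpow_sub_one_mul_exp_neg_mul_mul_log_sub hs (by positivity) _).const_mul _

lemma integral_exp_neg_mul_mul_wrightAlphaDerivTerm (hs : 0 < s) (hα : 0 ≤ α) (hβ : 0 < β)
    (lam : ℝ) (k : ℕ) :
    ∫ t in Ioi 0, exp (-(s * t)) * wrightAlphaDerivTerm α β lam k t =
      -(log s * s ^ (-β)) * (k * (lam * s ^ (-α)) ^ k / k !) := by
  have hΓ := (Gamma_pos_of_pos (by positivity : 0 < α * k + β)).ne'
  simp_rw [exp_neg_mul_mul_wrightAlphaDerivTerm]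
  rw [integral_const_mul,
    integral_rpow_sub_one_mul_exp_neg_mul_mul_log_sub_digamma hs (by positivity),
    rpow_neg_mul_natCast_add hs, mul_pow]
  field_simp

lemma summable_integral_norm_exp_neg_mul_mul_wrightAlphaDerivTerm (hs : 0 < s) (hα : 0 ≤ α)
    (hβ : 0 < β) (lam : ℝ) :
    Summable fun k : ℕ => ∫ t in Ioi 0, ‖exp (-(s * t)) * wrightAlphaDerivTerm α β lam k t‖ := by
  obtain ⟨K, hK⟩ := exists_integral_norm_rpow_sub_one_mul_exp_neg_mul_mul_log_sub_digamma_le hs hβ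
  set q := |lam| * s ^ (-α)
  have hbound : ∀ k : ℕ,
      ∫ t in Ioi 0, ‖exp (-(s * t)) * wrightAlphaDerivTerm α β lam k t‖ ≤
        K * s ^ (-β) * ((1 + β) * ((k : ℝ) ^ 1 * q ^ k / k !) + α * ((k : ℝ) ^ 2 * q ^ k / k !)) := by
    intro k
    have hΓ := Gamma_pos_of_pos (by positivity : 0 < α * k + β)
    simp_rw [exp_neg_mul_mul_wrightAlphaDerivTerm, norm_mul _ (_ * _ * (_ - _))]
    rw [integral_const_mul]
    calc _ ≤ ‖k * lam ^ k / (k ! * Gamma (α * k + β))‖ *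
          (K * ((1 + (α * k + β)) * Gamma (α * k + β) * s ^ (-(α * k + β)))) := by
          gcongr
          exact hK _ (le_add_of_nonneg_left (by positivity))
      _ = _ := by
          rw [norm_eq_abs, abs_div, abs_mul, abs_mul, abs_pow, Nat.abs_cast, Nat.abs_cast,
            abs_of_pos hΓ, rpow_neg_mul_natCast_add hs, mul_pow]
          field_simp
          ring
  refine Summable.of_nonneg_of_le (fun k => integral_nonneg fun t => norm_nonneg _) hbound ?_
  exact ((((summable_pow_mul_pow_div_factorial 1 q).mul_left (1 + β)).add
    ((summable_pow_mul_pow_div_factorial 2 q).mul_left α)).mul_left (K * s ^ (-β)))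

end WrightAlphaDerivTerm

end WrightLaplace

open WrightLaplace in
theorem laplace_deriv_alpha_Wright2 (α β lam s : ℝ) (hα : 0 < α) (hβ : 0 < β) (hs : 0 < s) :
    (∫ t in Set.Ioi (0 : ℝ), Real.exp (-(s * t)) *
        ∑' k : ℕ, (k : ℝ) * lam ^ k * t ^ (α * k + β - 1) *
          (Real.log t - digamma (α * k + β)) / (k.factorial * Real.Gamma (α * k + β)))
      = -(lam * Real.log s * s ^ (-(α + β)) * Real.exp (lam * s ^ (-α))) := by
  calc _ = ∫ t in Ioi 0, ∑' k, exp (-(s * t)) * wrightAlphaDerivTerm α β lam k t := by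
        simp_rw [tsum_mul_left]
        rfl
    _ = ∑' k : ℕ, ∫ t in Ioi 0, exp (-(s * t)) * wrightAlphaDerivTerm α β lam k t :=
        (integral_tsum_of_summable_integral_norm
          (integrableOn_exp_neg_mul_mul_wrightAlphaDerivTerm hs hα.le hβ lam)
          (summable_integral_norm_exp_neg_mul_mul_wrightAlphaDerivTerm hs hα.le hβ lam)).symm
    _ = ∑' k : ℕ, -(log s * s ^ (-β)) * (k * (lam * s ^ (-α)) ^ k / k !) :=
        tsum_congr (integral_exp_neg_mul_mul_wrightAlphaDerivTerm hs hα.le hβ lam)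
    _ = _ := by
        rw [tsum_mul_left, (hasSum_nat_mul_pow_div_factorial _).tsum_eq, neg_add, rpow_add hs]
        ring
end
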